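/- For all natural numbers a and k with 1 ≤ a ≤ k/2 + 1, the complexity of ζ_k^a in base ζ_k equals a; that is, ‖ζ_k^a‖_k = a. -/

import Mathlib

/-- Expressions built from a single symbol `x` using addition and multiplication. -/
inductive Expr where
  | x : Expr
  | add : Expr → Expr → Expr
  | mul : Expr → Expr → Expr

/-- The size of an expression: the number of occurrences of `x`. -/
def Expr.size : Expr → ℕ
  | .x => 1
  | .add a b => a.size + b.size
  | .mul a b => a.size + b.size

/-- Evaluate an expression, sending the symbol `x` to `z`. -/
def Expr.eval {R : Type*} [Add R] [Mul R] (z : R) : Expr → R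
  | .x => z
  | .add a b => a.eval z + b.eval z
  | .mul a b => a.eval z * b.eval z

/-- The primitive `k`-th root of unity `exp(2πi/k)`. -/
noncomputable def zeta (k : ℕ) : ℂ := Complex.exp (2 * Real.pi * Complex.I / k)

/-- The complexity of `n` with base `z`: the least number of copies of `z`
needed to express `n` using additions and multiplications. -/
noncomputable def complexity (z n : ℂ) : ℕ :=
  sInf {m | ∃ e : Expr, e.size = m ∧ e.eval z = n}

lemma polar_im (r φ : ℝ) : ((r : ℂ) * Complex.exp ((φ : ℂ) * Complex.I)).im = r * Real.sin φ := by
  rw [Complex.exp_mul_I]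
  simp [Complex.add_im, Complex.mul_im, Complex.sin_ofReal_re, Complex.cos_ofReal_re]

lemma polar_re (r φ : ℝ) : ((r : ℂ) * Complex.exp ((φ : ℂ) * Complex.I)).re = r * Real.cos φ := by
  rw [Complex.exp_mul_I]
  simp [Complex.add_re, Complex.mul_re, Complex.sin_ofReal_re, Complex.cos_ofReal_re]

lemma polar_rot (r φ θ : ℝ) :
    ((r : ℂ) * Complex.exp ((φ : ℂ) * Complex.I)) * Complex.exp ((-θ : ℂ) * Complex.I)
      = (r : ℂ) * Complex.exp (((φ - θ : ℝ) : ℂ) * Complex.I) := by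
  rw [mul_assoc, ← Complex.exp_add]
  push_cast
  ring_nf

lemma arg_polar (r φ : ℝ) (hr : 0 < r) (h1 : -Real.pi < φ) (h2 : φ ≤ Real.pi) :
    Complex.arg ((r : ℂ) * Complex.exp ((φ : ℂ) * Complex.I)) = φ := by
  rw [Complex.exp_mul_I]
  exact Complex.arg_mul_cos_add_sin_mul_I hr ⟨h1, h2⟩

lemma polar_self (s : ℂ) : s = ((‖s‖ : ℝ) : ℂ) * Complex.exp ((Complex.arg s : ℂ) * Complex.I) :=
  (Complex.norm_mul_exp_arg_mul_I s).symm

lemma Expr.size_pos (e : Expr) : 1 ≤ e.size := by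
  induction e with
  | x => simp [Expr.size]
  | add a b iha ihb => simp [Expr.size]; omega
  | mul a b iha ihb => simp [Expr.size]; omega

lemma zeta_eq (k : ℕ) : zeta k = Complex.exp (((2 * Real.pi / k : ℝ) : ℂ) * Complex.I) := by
  unfold zeta; congr 1; push_cast; ring

set_option maxHeartbeats 1000000 in
lemma key (k : ℕ) (e : Expr) : 2 * e.size ≤ k →
    ∃ r φ : ℝ, 0 < r ∧ 0 ≤ φ ∧ φ ≤ 2 * Real.pi * e.size / k ∧
      e.eval (zeta k) = (r : ℂ) * Complex.exp ((φ : ℂ) * Complex.I) := by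
  induction e with
  | x =>
    intro h
    have hk : (0:ℝ) < k := by
      have : 2 ≤ k := by simpa [Expr.size] using h
      positivity
    refine ⟨1, 2 * Real.pi / k, one_pos, by positivity, ?_, ?_⟩
    · simp [Expr.size]
    · simp [Expr.eval, zeta_eq]
  | mul e1 e2 ih1 ih2 =>
    intro h
    have hs1 := e1.size_pos
    have hs2 := e2.size_pos
    have hk : (0:ℝ) < k := by
      have : 2 ≤ k := by simp [Expr.size] at h; omega
      positivity
    obtain ⟨r1, φ1, hr1, hφ1, hb1, he1⟩ := ih1 (by simp [Expr.size] at h ⊢; omega)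
    obtain ⟨r2, φ2, hr2, hφ2, hb2, he2⟩ := ih2 (by simp [Expr.size] at h ⊢; omega)
    refine ⟨r1 * r2, φ1 + φ2, by positivity, by positivity, ?_, ?_⟩
    · simp only [Expr.size]
      push_cast
      have heq : 2 * Real.pi * (e1.size:ℝ) / k + 2 * Real.pi * (e2.size:ℝ) / k
          = 2 * Real.pi * ((e1.size:ℝ) + (e2.size:ℝ)) / k := by ring
      linarith [add_le_add hb1 hb2]
    · simp only [Expr.eval, he1, he2]
      rw [mul_mul_mul_comm, ← Complex.exp_add]
      push_cast
      ring_nf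
  | add e1 e2 ih1 ih2 =>
    intro h
    have hs1 := e1.size_pos
    have hs2 := e2.size_pos
    have hk2 : 4 ≤ k := by simp [Expr.size] at h; omega
    have hk : (0:ℝ) < k := by positivity
    obtain ⟨r1, φ1, hr1, hφ1, hb1, he1⟩ := ih1 (by simp [Expr.size] at h ⊢; omega)
    obtain ⟨r2, φ2, hr2, hφ2, hb2, he2⟩ := ih2 (by simp [Expr.size] at h ⊢; omega)
    set m1 := e1.size
    set m2 := e2.size
    have hsize : (Expr.add e1 e2).size = m1 + m2 := rfl
    have hmk : 2 * ((m1:ℝ) + m2) ≤ k := by exact_mod_cast (by simpa [hsize] using h : 2 * (m1 + m2) ≤ k)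
    -- φ1 < π, φ2 < π
    have hφ1π : φ1 < Real.pi := by
      have : 2 * Real.pi * m1 / k < Real.pi := by
        rw [div_lt_iff₀ hk]
        have : (1:ℝ) ≤ m2 := by exact_mod_cast hs2
        nlinarith [Real.pi_pos]
      linarith
    have hφ2π : φ2 < Real.pi := by
      have : 2 * Real.pi * m2 / k < Real.pi := by
        rw [div_lt_iff₀ hk]
        have : (1:ℝ) ≤ m1 := by exact_mod_cast hs1
        nlinarith [Real.pi_pos]
      linarith
    set z1 := e1.eval (zeta k)
    set z2 := e2.eval (zeta k)
    set s := z1 + z2 with hs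
    have him1 : z1.im = r1 * Real.sin φ1 := by rw [he1, polar_im]
    have him2 : z2.im = r2 * Real.sin φ2 := by rw [he2, polar_im]
    have hsin1 : 0 ≤ Real.sin φ1 := Real.sin_nonneg_of_nonneg_of_le_pi hφ1 hφ1π.le
    have hsin2 : 0 ≤ Real.sin φ2 := Real.sin_nonneg_of_nonneg_of_le_pi hφ2 hφ2π.le
    have hims : 0 ≤ s.im := by
      simp only [hs, Complex.add_im, him1, him2]
      positivity
    -- s ≠ 0
    have hs0 : s ≠ 0 := by
      intro h0
      have : z1.im + z2.im = 0 := by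
        have := congrArg Complex.im h0
        simpa [hs, Complex.add_im] using this
      have h1 : z1.im = 0 := by nlinarith
      have h2 : z2.im = 0 := by nlinarith
      have hsz1 : Real.sin φ1 = 0 := by
        rw [him1] at h1; exact (mul_eq_zero.mp h1).resolve_left (ne_of_gt hr1)
      have hsz2 : Real.sin φ2 = 0 := by
        rw [him2] at h2; exact (mul_eq_zero.mp h2).resolve_left (ne_of_gt hr2)
      have hφ10 : φ1 = 0 := by
        rwa [Real.sin_eq_zero_iff_of_lt_of_lt (by linarith [Real.pi_pos]) hφ1π] at hsz1
      have hφ20 : φ2 = 0 := by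
        rwa [Real.sin_eq_zero_iff_of_lt_of_lt (by linarith [Real.pi_pos]) hφ2π] at hsz2
      have : s.re = r1 + r2 := by
        simp only [hs, Complex.add_re]
        rw [he1, he2, polar_re, polar_re, hφ10, hφ20, Real.cos_zero]
        ring
      rw [h0] at this
      simp at this
      linarith
    have habs : 0 < ‖s‖ := norm_pos_iff.mpr hs0
    refine ⟨‖s‖, Complex.arg s, habs, Complex.arg_nonneg_iff.mpr hims, ?_, ?_⟩
    · -- arg s ≤ θ
      set θ : ℝ := 2 * Real.pi * ((Expr.add e1 e2).size : ℝ) / k with hθ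
      have hθeq : θ = 2 * Real.pi * ((m1:ℝ) + m2) / k := by rw [hθ, hsize]; push_cast; ring
      by_cases hθπ : Real.pi ≤ θ
      · exact le_trans (Complex.arg_le_pi s) hθπ
      push_neg at hθπ
      have hθpos : 0 < θ := by
        rw [hθeq]
        have h1 : (1:ℝ) ≤ m1 := by exact_mod_cast hs1
        have h2 : (1:ℝ) ≤ m2 := by exact_mod_cast hs2
        have := Real.pi_pos
        positivity
      have hm1 : (1:ℝ) ≤ m1 := by exact_mod_cast hs1
      have hm2 : (1:ℝ) ≤ m2 := by exact_mod_cast hs2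
      have hpi := Real.pi_pos
      have heq : 2 * Real.pi * ((m1:ℝ) + m2) / k
          = 2 * Real.pi * (m1:ℝ) / k + 2 * Real.pi * (m2:ℝ) / k := by ring
      have hb1' : φ1 ≤ θ := by
        rw [hθeq, heq]
        have : (0:ℝ) ≤ 2 * Real.pi * (m2:ℝ) / k := by positivity
        linarith
      have hb2' : φ2 ≤ θ := by
        rw [hθeq, heq]
        have : (0:ℝ) ≤ 2 * Real.pi * (m1:ℝ) / k := by positivity
        linarith
      have key1 : (z1 * Complex.exp ((-θ : ℂ) * Complex.I)).im ≤ 0 := by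
        rw [he1, polar_rot, polar_im]
        exact mul_nonpos_of_nonneg_of_nonpos hr1.le
          (Real.sin_nonpos_of_nonpos_of_neg_pi_le (by linarith) (by linarith))
      have key2 : (z2 * Complex.exp ((-θ : ℂ) * Complex.I)).im ≤ 0 := by
        rw [he2, polar_rot, polar_im]
        exact mul_nonpos_of_nonneg_of_nonpos hr2.le
          (Real.sin_nonpos_of_nonpos_of_neg_pi_le (by linarith) (by linarith))
      have keys : (s * Complex.exp ((-θ : ℂ) * Complex.I)).im ≤ 0 := by
        rw [hs, add_mul, Complex.add_im]
        linarith
      have keys2 : (s * Complex.exp ((-θ : ℂ) * Complex.I)).im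
          = ‖s‖ * Real.sin (Complex.arg s - θ) := by
        conv_lhs => rw [polar_self s]
        rw [polar_rot, polar_im]
      have hsinarg : Real.sin (Complex.arg s - θ) ≤ 0 := by
        by_contra hpos
        push_neg at hpos
        have hmp := mul_pos habs hpos
        rw [keys2] at keys
        linarith
      by_contra hgt
      push_neg at hgt
      have : 0 < Real.sin (Complex.arg s - θ) :=
        Real.sin_pos_of_pos_of_lt_pi (by linarith) (by linarith [Complex.arg_le_pi s])
      linarith
    · exact polar_self s


def powExpr : ℕ → Expr
  | 0 => .x
  | n + 1 => .mul .x (powExpr n)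

lemma powExpr_size (n : ℕ) : (powExpr n).size = n + 1 := by
  induction n with
  | zero => rfl
  | succ n ih => simp [powExpr, Expr.size, ih]; omega

lemma powExpr_eval (z : ℂ) (n : ℕ) : (powExpr n).eval z = z ^ (n + 1) := by
  induction n with
  | zero => simp [powExpr, Expr.eval]
  | succ n ih => simp [powExpr, Expr.eval, ih]; ring

lemma zeta_pow_eq (k a : ℕ) : zeta k ^ a = Complex.exp (((2 * Real.pi * a / k : ℝ) : ℂ) * Complex.I) := by
  rw [zeta_eq, ← Complex.exp_nat_mul]
  congr 1
  push_cast
  ring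

lemma arg_exp (φ : ℝ) (h1 : -Real.pi < φ) (h2 : φ ≤ Real.pi) :
    Complex.arg (Complex.exp ((φ : ℂ) * Complex.I)) = φ := by
  have := arg_polar 1 φ one_pos h1 h2
  simpa using this


theorem complexity_zeta_pow (k a : ℕ) (hk : k ≠ 0)
    (ha1 : 1 ≤ a) (ha2 : (a : ℝ) ≤ (k : ℝ) / 2 + 1) :
    complexity (zeta k) (zeta k ^ a) = a := by
  have hkpos : 0 < k := Nat.pos_of_ne_zero hk
  have hk' : (0:ℝ) < k := by exact_mod_cast hkpos
  have hπ := Real.pi_pos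
  have hmem : a ∈ {m | ∃ e : Expr, e.size = m ∧ e.eval (zeta k) = zeta k ^ a} := by
    refine ⟨powExpr (a - 1), ?_, ?_⟩
    · rw [powExpr_size]; omega
    · rw [powExpr_eval]; congr 1; omega
  refine le_antisymm (Nat.sInf_le hmem) (le_csInf ⟨a, hmem⟩ ?_)
  rintro m ⟨e, hsize, heval⟩
  by_contra hlt
  push_neg at hlt
  have hm1 : 1 ≤ m := hsize ▸ e.size_pos
  have h2m : 2 * m ≤ k := by
    have hma : (m:ℝ) + 1 ≤ a := by exact_mod_cast hlt
    have h1 : ((2 * m : ℕ) : ℝ) ≤ (k : ℝ) := by push_cast; linarith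
    exact_mod_cast h1
  obtain ⟨r, φ, hr, hφ0, hφb, hev⟩ := key k e (hsize ▸ h2m)
  rw [hsize] at hφb
  have h2m' : 2 * (m:ℝ) ≤ k := by exact_mod_cast h2m
  have hφπ : φ ≤ Real.pi := by
    have : 2 * Real.pi * (m:ℝ) / k ≤ Real.pi := by
      rw [div_le_iff₀ hk']
      nlinarith
    linarith
  have harg : Complex.arg (zeta k ^ a) = φ := by
    rw [← heval, hev]
    exact arg_polar r φ hr (by linarith) hφπ
  by_cases hcase : 2 * a ≤ k
  · have h2a' : 2 * (a:ℝ) ≤ k := by exact_mod_cast hcase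
    have harga : Complex.arg (zeta k ^ a) = 2 * Real.pi * a / k := by
      rw [zeta_pow_eq]
      refine arg_exp _ ?_ ?_
      · have h1 : (1:ℝ) ≤ a := by exact_mod_cast ha1
        have : (0:ℝ) < 2 * Real.pi * a / k := by positivity
        linarith
      · rw [div_le_iff₀ hk']; nlinarith
    have hle : 2 * Real.pi * (a:ℝ) / k ≤ 2 * Real.pi * (m:ℝ) / k := by
      rw [harga] at harg; rw [harg]; exact hφb
    have hle2 := mul_le_mul_of_nonneg_right hle hk'.le
    rw [div_mul_cancel₀ _ (ne_of_gt hk'), div_mul_cancel₀ _ (ne_of_gt hk')] at hle2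
    have : (a:ℝ) ≤ m := by nlinarith
    have : a ≤ m := by exact_mod_cast this
    omega
  · push_neg at hcase
    by_cases hak : a < k
    · set ψ : ℝ := 2 * Real.pi * a / k - 2 * Real.pi with hψ
      have hak' : (a:ℝ) < k := by exact_mod_cast hak
      have hka' : (k:ℝ) < 2 * a := by exact_mod_cast hcase
      have hψneg : ψ < 0 := by
        rw [hψ, sub_neg, div_lt_iff₀ hk']
        nlinarith
      have hψgt : -Real.pi < ψ := by
        have : Real.pi < 2 * Real.pi * (a:ℝ) / k := by
          rw [lt_div_iff₀ hk']; nlinarith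
        rw [hψ]; linarith
      have hz : zeta k ^ a = Complex.exp ((ψ : ℂ) * Complex.I) := by
        rw [hψ, Complex.ofReal_sub, sub_mul, Complex.exp_sub, zeta_pow_eq,
          show ((2 * Real.pi : ℝ) : ℂ) * Complex.I = 2 * (Real.pi : ℂ) * Complex.I by
            push_cast; ring,
          Complex.exp_two_pi_mul_I, div_one]
      have : Complex.arg (zeta k ^ a) = ψ := by rw [hz]; exact arg_exp ψ hψgt (by linarith)
      rw [harg] at this
      linarith
    · push_neg at hak
      have h2a2 : 2 * a ≤ k + 2 := by
        have : 2 * (a:ℝ) ≤ (k:ℝ) + 2 := by linarith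
        exact_mod_cast this
      have hk2 : k = 2 := by omega
      have ha2eq : a = 2 := by omega
      have hmeq : m = 1 := by omega
      have hex : e = Expr.x := by
        cases e with
        | x => rfl
        | add e1 e2 =>
          exfalso
          have := e1.size_pos; have := e2.size_pos
          simp [Expr.size] at hsize; omega
        | mul e1 e2 =>
          exfalso
          have := e1.size_pos; have := e2.size_pos
          simp [Expr.size] at hsize; omega
      subst hk2 ha2eq hex
      have hz2 : zeta 2 = -1 := by
        rw [zeta_eq,
          show ((2 * Real.pi / ((2:ℕ):ℝ) : ℝ) : ℂ) * Complex.I = (Real.pi : ℂ) * Complex.I by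
            push_cast; ring,
          Complex.exp_pi_mul_I]
      rw [show Expr.eval (zeta 2) Expr.x = zeta 2 from rfl, hz2] at heval
      norm_num at heval
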